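/- Let G be a cubic graph, let C be a circuit of G, and let G_C be the multigraph obtained from G by contracting all edges of C to a single vertex. Then any join J' of G_C can be extended to a join J of G whose restriction to the edges of G not in C corresponds to J'; moreover, there are exactly two such extensions, which differ by the symmetric difference with E(C). -/

import Mathlib

/-- The number of edges of `S` incident with `v`. -/
noncomputable def edgeDeg {V : Type*} (S : Set (Sym2 V)) (v : V) : ℕ :=
  {e ∈ S | v ∈ e}.ncard

/-- `J` is a join of `G`: a set of edges such that each vertex has degree in `J` of the same
parity as its degree in `G`. -/
def IsJoinOf {V : Type*} (G : SimpleGraph V) (J : Set (Sym2 V)) : Prop :=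
  J ⊆ G.edgeSet ∧ ∀ v : V, edgeDeg J v % 2 = edgeDeg G.edgeSet v % 2

/-!
A join of `G` that agrees with `J'` off `E(C)` is `J' ∪ T` with `T ⊆ E(C)`. Since every vertex
of `G` has odd degree, the condition on `T` is that its odd-degree vertices are exactly the set
`S` of vertices where `J'` has even degree. By hypothesis `S ⊆ V(C)`, and `S` has even size by the
handshake lemma applied to `J'` and to `G`. In the connected graph `C` every even set of vertices
is the odd-degree set of some edge set (a symmetric difference of paths pairing up its vertices),
and two such edge sets differ by an edge set of `C` with all degrees even, which in a connected
2-regular graph is `∅` or `E(C)`.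
-/

section edgeDeg

variable {V : Type*}

theorem edgeDeg_eq_ncard (S : Set (Sym2 V)) (v : V) :
    edgeDeg S v = {w | s(v, w) ∈ S}.ncard := by
  have : {e ∈ S | v ∈ e} = (fun w => s(v, w)) '' {w | s(v, w) ∈ S} := by
    ext e
    constructor
    · rintro ⟨he, hv⟩
      refine ⟨Sym2.Mem.other hv, ?_, Sym2.other_spec hv⟩
      rwa [Set.mem_ofPred_eq, Sym2.other_spec hv]
    · rintro ⟨w, hw, rfl⟩
      exact ⟨hw, Sym2.mem_mk_left v w⟩
  rw [edgeDeg, this, Set.ncard_image_of_injective _ fun _ _ => Sym2.congr_right.mp]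

theorem edgeDeg_edgeSet (G : SimpleGraph V) (v : V) [Fintype (G.neighborSet v)] :
    edgeDeg G.edgeSet v = G.degree v := by
  rw [edgeDeg_eq_ncard, ← G.card_neighborSet_eq_degree, ← Set.toFinset_card,
    ← Set.ncard_eq_toFinset_card']
  rfl

theorem even_card_odd_edgeDeg [Fintype V] {S : Set (Sym2 V)} (hS : ∀ e ∈ S, ¬e.IsDiag) :
    Even (Finset.univ.filter fun v => Odd (edgeDeg S v)).card := by
  classical
  have hedges : (SimpleGraph.fromEdgeSet S).edgeSet = S := by
    rw [SimpleGraph.edgeSet_fromEdgeSet, sdiff_eq_left]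
    exact Set.disjoint_left.mpr hS
  convert (SimpleGraph.fromEdgeSet S).even_card_odd_degree_vertices using 4 with v
  rw [← edgeDeg_edgeSet, hedges]

variable [Finite V]

theorem edgeDeg_union {S T : Set (Sym2 V)} (h : Disjoint S T) (v : V) :
    edgeDeg (S ∪ T) v = edgeDeg S v + edgeDeg T v := by
  have : {e ∈ S ∪ T | v ∈ e} = {e ∈ S | v ∈ e} ∪ {e ∈ T | v ∈ e} :=
    Set.ext fun _ => or_and_right
  rw [edgeDeg, this]
  exact Set.ncard_union_eq (h.mono (Set.sep_subset _ _) (Set.sep_subset _ _))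

theorem odd_edgeDeg_symmDiff (S T : Set (Sym2 V)) (v : V) :
    Odd (edgeDeg (symmDiff S T) v) ↔ (Odd (edgeDeg S v) ↔ ¬Odd (edgeDeg T v)) := by
  have hS : edgeDeg S v = edgeDeg (S \ T) v + edgeDeg (S ∩ T) v := by
    rw [← edgeDeg_union Set.disjoint_sdiff_inter, Set.sdiff_union_inter]
  have hT : edgeDeg T v = edgeDeg (T \ S) v + edgeDeg (S ∩ T) v := by
    rw [Set.inter_comm, ← edgeDeg_union Set.disjoint_sdiff_inter, Set.sdiff_union_inter]
  rw [Set.symmDiff_def, edgeDeg_union disjoint_sdiff_sdiff, hS, hT]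
  simp only [Nat.odd_add, ← Nat.not_odd_iff_even]
  tauto

end edgeDeg

namespace SimpleGraph

variable {V : Type*} {G : SimpleGraph V}

theorem Walk.IsTrail.odd_edgeDeg_edgeSet_iff [Finite V] {u w : V} {p : G.Walk u w}
    (hp : p.IsTrail) (huw : u ≠ w) (x : V) :
    Odd (edgeDeg p.edgeSet x) ↔ x = u ∨ x = w := by
  classical
  have hcount : edgeDeg p.edgeSet x = p.edges.countP (x ∈ ·) := by
    rw [List.countP_eq_length_filter, ← List.toFinset_card_of_nodup (hp.edges_nodup.filter _),
      ← Set.ncard_coe_finset, edgeDeg]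
    congr 1
    ext e
    simp [Walk.mem_edgeSet]
  rw [← Nat.not_even_iff_odd, hcount, hp.even_countP_edges_iff]
  tauto

namespace Subgraph

variable {C : G.Subgraph}

theorem Connected.induction_on_adj (hC : C.Connected) {P : V → Prop}
    (hP : ∀ ⦃u w⦄, C.Adj u w → P u → P w) {u w : V} (hu : u ∈ C.verts) (hw : w ∈ C.verts)
    (h : P u) : P w := by
  suffices ∀ x : C.verts, Relation.ReflTransGen C.coe.Adj ⟨u, hu⟩ x → P x from
    this ⟨w, hw⟩ ((reachable_iff_reflTransGen _ _).mp (hC.preconnected _ _))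
  intro x hx
  induction hx with
  | refl => exact h
  | tail _ hab ih => exact hP hab ih

theorem Connected.exists_odd_edgeDeg_iff [Fintype V] (hC : C.Connected) (S : Finset V)
    (hSC : ↑S ⊆ C.verts) (hS : Even S.card) :
    ∃ T ⊆ C.edgeSet, ∀ v, Odd (edgeDeg T v) ↔ v ∈ S := by
  classical
  induction S using Finset.strongInduction with
  | H S ih =>
  rcases S.eq_empty_or_nonempty with rfl | ⟨u, hu⟩
  · exact ⟨∅, Set.empty_subset _, fun v => by simp [edgeDeg]⟩
  have hcard := Finset.card_erase_of_mem hu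
  obtain ⟨w, hw⟩ : (S.erase u).Nonempty := by
    rw [← Finset.card_pos, hcard]
    obtain ⟨k, hk⟩ := hS
    have := Finset.card_pos.mpr ⟨u, hu⟩
    omega
  have huw : u ≠ w := (Finset.ne_of_mem_erase hw).symm
  obtain ⟨T, hTC, hT⟩ := ih ((S.erase u).erase w)
    ((Finset.erase_ssubset hw).trans (Finset.erase_ssubset hu))
    (fun v hv => hSC (Finset.mem_of_mem_erase (Finset.mem_of_mem_erase hv)))
    (by rw [Finset.card_erase_of_mem hw, hcard, Nat.sub_sub]; exact hS.tsub (by decide))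
  obtain ⟨p, hpC⟩ := (C.connected_iff_forall_exists_walk_subgraph.mp hC).2
    (hSC hu) (hSC (Finset.mem_of_mem_erase hw))
  have hpath : p.bypass.edgeSet ⊆ C.edgeSet := by
    rw [← Walk.edgeSet_toSubgraph]
    exact edgeSet_mono (Walk.toSubgraph_bypass_le_toSubgraph.trans hpC)
  refine ⟨symmDiff T p.bypass.edgeSet, ?_, fun v => ?_⟩
  · exact Set.symmDiff_subset_union.trans (Set.union_subset hTC hpath)
  · rw [odd_edgeDeg_symmDiff, hT, p.bypass_isPath.isTrail.odd_edgeDeg_edgeSet_iff huw]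
    simp only [Finset.mem_erase]
    by_cases hvu : v = u <;> by_cases hvw : v = w <;> simp_all

theorem even_edgeDeg_edgeSet (hreg : ∀ v ∈ C.verts, (C.neighborSet v).ncard = 2) (v : V) :
    Even (edgeDeg C.edgeSet v) := by
  rw [edgeDeg_eq_ncard]
  change Even (C.neighborSet v).ncard
  by_cases hv : v ∈ C.verts
  · rw [hreg v hv]
    exact even_two
  · have : C.neighborSet v = ∅ :=
      Set.eq_empty_of_forall_notMem fun w hw => hv (C.edge_vert hw)
    rw [this, Set.ncard_empty]
    exact Even.zero

theorem Connected.edgeSet_nonempty (hC : C.Connected)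
    (hreg : ∀ v ∈ C.verts, (C.neighborSet v).ncard = 2) : C.edgeSet.Nonempty := by
  obtain ⟨v, hv⟩ := hC.nonempty
  obtain ⟨w, hw⟩ : (C.neighborSet v).Nonempty :=
    Set.nonempty_of_ncard_ne_zero (by simp [hreg v hv])
  exact ⟨s(v, w), hw⟩

variable [Finite V]

theorem mem_iff_mem_of_even_edgeDeg {T : Set (Sym2 V)} {v a b : V}
    (hv : (C.neighborSet v).ncard = 2) (hTC : T ⊆ C.edgeSet) (hT : Even (edgeDeg T v))
    (ha : C.Adj v a) (hb : C.Adj v b) : s(v, a) ∈ T ↔ s(v, b) ∈ T := by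
  suffices key : ∀ a b, C.Adj v b → s(v, a) ∈ T → s(v, b) ∈ T from ⟨key a b hb, key b a ha⟩
  intro a b hb haT
  by_contra hbT
  have hlt : {w | s(v, w) ∈ T}.ncard < 2 :=
    hv ▸ Set.ncard_lt_ncard ⟨fun w hw => C.mem_edgeSet.mp (hTC hw), fun h => hbT (h hb)⟩
  have hpos : 0 < {w | s(v, w) ∈ T}.ncard := (Set.ncard_pos (Set.toFinite _)).mpr ⟨a, haT⟩
  rw [edgeDeg_eq_ncard] at hT
  obtain ⟨k, hk⟩ := hT
  omega

theorem odd_edgeDeg_symmDiff_edgeSet (hreg : ∀ v ∈ C.verts, (C.neighborSet v).ncard = 2)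
    (T : Set (Sym2 V)) (v : V) :
    Odd (edgeDeg (symmDiff T C.edgeSet) v) ↔ Odd (edgeDeg T v) := by
  rw [odd_edgeDeg_symmDiff, ← Nat.not_even_iff_odd (n := edgeDeg C.edgeSet v)]
  simp [even_edgeDeg_edgeSet hreg v]

theorem Connected.eq_empty_or_eq_edgeSet_of_even_edgeDeg (hC : C.Connected)
    (hreg : ∀ v ∈ C.verts, (C.neighborSet v).ncard = 2) {T : Set (Sym2 V)}
    (hTC : T ⊆ C.edgeSet) (hT : ∀ v, Even (edgeDeg T v)) : T = ∅ ∨ T = C.edgeSet := by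
  have hlocal : ∀ ⦃v a b⦄, C.Adj v a → C.Adj v b → (s(v, a) ∈ T ↔ s(v, b) ∈ T) :=
    fun v a b ha hb => mem_iff_mem_of_even_edgeDeg (hreg v (C.edge_vert ha)) hTC (hT v) ha hb
  refine T.eq_empty_or_nonempty.imp id fun ⟨e, he⟩ => ?_
  have hP : ∀ ⦃u w⦄, C.Adj u w → (∀ x, C.Adj u x → s(u, x) ∈ T) →
      ∀ x, C.Adj w x → s(w, x) ∈ T :=
    fun u w huw hu x hx => (hlocal huw.symm hx).mp (Sym2.eq_swap ▸ hu w huw)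
  induction e using Sym2.ind with | h u w =>
  have hu : ∀ x, C.Adj u x → s(u, x) ∈ T :=
    fun x hx => (hlocal (C.mem_edgeSet.mp (hTC he)) hx).mp he
  refine subset_antisymm hTC fun f hf => ?_
  induction f using Sym2.ind with | h x y =>
  exact hC.induction_on_adj hP (C.edge_vert (C.mem_edgeSet.mp (hTC he)))
    (C.edge_vert (C.mem_edgeSet.mp hf)) hu y hf

theorem Connected.eq_or_eq_symmDiff_of_odd_edgeDeg_iff (hC : C.Connected)
    (hreg : ∀ v ∈ C.verts, (C.neighborSet v).ncard = 2) {T₁ T₂ : Set (Sym2 V)}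
    (h₁ : T₁ ⊆ C.edgeSet) (h₂ : T₂ ⊆ C.edgeSet)
    (h : ∀ v, Odd (edgeDeg T₁ v) ↔ Odd (edgeDeg T₂ v)) :
    T₂ = T₁ ∨ T₂ = symmDiff T₁ C.edgeSet := by
  have heven : ∀ v, Even (edgeDeg (symmDiff T₁ T₂) v) := fun v => by
    rw [← Nat.not_odd_iff_even, odd_edgeDeg_symmDiff, h v]
    tauto
  rcases hC.eq_empty_or_eq_edgeSet_of_even_edgeDeg hreg
    (Set.symmDiff_subset_union.trans (Set.union_subset h₁ h₂)) heven with h0 | hE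
  · exact Or.inl (symmDiff_eq_bot.mp h0).symm
  · exact Or.inr (by rw [← hE, symmDiff_symmDiff_cancel_left])

end Subgraph

end SimpleGraph

section IsJoinOf

variable {V : Type*} {G : SimpleGraph V}

theorem isJoinOf_union_iff [Finite V] [G.LocallyFinite] (hodd : ∀ v, Odd (G.degree v))
    {J T : Set (Sym2 V)} (hJ : J ⊆ G.edgeSet) (hT : T ⊆ G.edgeSet) (hdisj : Disjoint J T) :
    IsJoinOf G (J ∪ T) ↔ ∀ v, Odd (edgeDeg T v) ↔ Even (edgeDeg J v) := by
  simp only [IsJoinOf, Set.union_subset hJ hT, true_and]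
  refine forall_congr' fun v => ?_
  rw [edgeDeg_union hdisj, edgeDeg_edgeSet, Nat.odd_iff.mp (hodd v), ← Nat.odd_iff, Nat.odd_add]
  simp only [← Nat.not_even_iff_odd]
  tauto

theorem even_card_even_edgeDeg [Fintype V] [DecidableRel G.Adj] (hodd : ∀ v, Odd (G.degree v))
    {J : Set (Sym2 V)} (hJ : J ⊆ G.edgeSet) :
    Even (Finset.univ.filter fun v => Even (edgeDeg J v)).card := by
  have hV : Even (Fintype.card V) := by simpa [hodd] using G.even_card_odd_degree_vertices
  rw [← Finset.card_univ, ← Finset.card_filter_add_card_filter_not fun v => Even (edgeDeg J v)]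
    at hV
  simp only [Nat.not_even_iff_odd] at hV
  exact (Nat.even_add.mp hV).mpr
    (even_card_odd_edgeDeg fun e he => G.not_isDiag_of_mem_edgeSet (hJ he))

end IsJoinOf

open SimpleGraph

theorem join_extension_of_contraction_general {V : Type*} [Fintype V]
    (G : SimpleGraph V) [DecidableRel G.Adj]
    (hcubic : ∀ v : V, G.degree v = 3)
    (C : G.Subgraph) (hCconn : C.Connected)
    (hCreg : ∀ v ∈ C.verts, (C.neighborSet v).ncard = 2)
    (J' : Set (Sym2 V)) (hJ'sub : J' ⊆ G.edgeSet \ C.edgeSet)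
    (hJ'out : ∀ v ∉ C.verts, edgeDeg J' v % 2 = edgeDeg G.edgeSet v % 2) :
    ∃ J₁ J₂ : Set (Sym2 V), J₁ ≠ J₂ ∧ J₂ = symmDiff J₁ C.edgeSet ∧
      (∀ J ∈ ({J₁, J₂} : Set (Set (Sym2 V))), IsJoinOf G J ∧ J \ C.edgeSet = J') ∧
      (∀ J : Set (Sym2 V), IsJoinOf G J → J \ C.edgeSet = J' → J = J₁ ∨ J = J₂) := by
  classical
  have hodd : ∀ v, Odd (G.degree v) := fun v => by rw [hcubic]; decide
  obtain ⟨hJ'G, hJ'C⟩ := Set.subset_sdiff.mp hJ'sub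
  set S := Finset.univ.filter fun v => Even (edgeDeg J' v)
  have hext : ∀ T ⊆ C.edgeSet, IsJoinOf G (J' ∪ T) ↔ ∀ v, Odd (edgeDeg T v) ↔ v ∈ S :=
    fun T hT => by
      simpa [S] using
        isJoinOf_union_iff hodd hJ'G (hT.trans C.edgeSet_subset) (hJ'C.mono_right hT)
  have hSC : ↑S ⊆ C.verts := fun v hv => by_contra fun hvC => by
    have := hJ'out v hvC
    simp_all [S, edgeDeg_edgeSet, Nat.even_iff]
  obtain ⟨T, hTC, hT⟩ := hCconn.exists_odd_edgeDeg_iff S hSC (even_card_even_edgeDeg hodd hJ'G)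
  have hT₂C : symmDiff T C.edgeSet ⊆ C.edgeSet :=
    Set.symmDiff_subset_union.trans (Set.union_subset hTC le_rfl)
  have hrestrict : ∀ X ⊆ C.edgeSet, (J' ∪ X) \ C.edgeSet = J' := fun X hX => by
    rw [Set.union_sdiff_distrib, Set.sdiff_eq_empty.mpr hX, Set.union_empty, hJ'C.sdiff_eq_left]
  have hsymm : J' ∪ symmDiff T C.edgeSet = symmDiff (J' ∪ T) C.edgeSet := by
    change J' ⊔ symmDiff T C.edgeSet = symmDiff (J' ⊔ T) C.edgeSet
    rw [← (hJ'C.mono_right hTC).symmDiff_eq_sup, symmDiff_assoc,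
      (hJ'C.mono_right hT₂C).symmDiff_eq_sup]
  refine ⟨J' ∪ T, J' ∪ symmDiff T C.edgeSet, ?_, hsymm, ?_, fun J hJ hJE => ?_⟩
  · rw [hsymm]
    exact fun h => (hCconn.edgeSet_nonempty hCreg).ne_empty (symmDiff_eq_left.mp h.symm)
  · rintro J (rfl | rfl)
    · exact ⟨(hext T hTC).mpr hT, hrestrict T hTC⟩
    · refine ⟨(hext _ hT₂C).mpr fun v => ?_, hrestrict _ hT₂C⟩
      rw [Subgraph.odd_edgeDeg_symmDiff_edgeSet hCreg, hT]
  · have hJC : J ∩ C.edgeSet ⊆ C.edgeSet := Set.inter_subset_right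
    have hJdecomp : J = J' ∪ J ∩ C.edgeSet := by rw [← hJE, Set.sdiff_union_inter]
    rw [hJdecomp] at hJ ⊢
    rcases hCconn.eq_or_eq_symmDiff_of_odd_edgeDeg_iff hCreg hTC hJC
      (fun v => by rw [hT, (hext _ hJC).mp hJ]) with h | h <;> rw [h] <;> simp

/-- Let `G` be cubic and `C` a circuit of `G` (a connected 2-regular
subgraph). A join `J'` of the multigraph `G_C` obtained by contracting `C` to a single
vertex — encoded as a set of edges of `G` avoiding `E(C)` satisfying the join parity
condition at every vertex outside `C` and at the contracted vertex — extends to a join `J`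
of `G` with `J \ E(C) = J'`; moreover there are exactly two such extensions and they differ
by the symmetric difference with `E(C)`. -/
theorem join_extension_of_contraction {V : Type*} [Fintype V] [DecidableEq V]
    (G : SimpleGraph V) [DecidableRel G.Adj]
    (hcubic : ∀ v : V, G.degree v = 3)
    (C : G.Subgraph) (hCconn : C.Connected)
    (hCreg : ∀ v ∈ C.verts, (C.neighborSet v).ncard = 2)
    (J' : Set (Sym2 V)) (hJ'sub : J' ⊆ G.edgeSet \ C.edgeSet)
    (hJ'out : ∀ v ∉ C.verts, edgeDeg J' v % 2 = edgeDeg G.edgeSet v % 2)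
    (hJ'contr : {e ∈ J' | ∃ v ∈ C.verts, v ∈ e}.ncard % 2
        = {e ∈ G.edgeSet \ C.edgeSet | ∃ v ∈ C.verts, v ∈ e}.ncard % 2) :
    ∃ J₁ J₂ : Set (Sym2 V), J₁ ≠ J₂ ∧ J₂ = symmDiff J₁ C.edgeSet ∧
      (∀ J ∈ ({J₁, J₂} : Set (Set (Sym2 V))), IsJoinOf G J ∧ J \ C.edgeSet = J') ∧
      (∀ J : Set (Sym2 V), IsJoinOf G J → J \ C.edgeSet = J' → J = J₁ ∨ J = J₂) :=
  join_extension_of_contraction_general G hcubic C hCconn hCreg J' hJ'sub hJ'out
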